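/- Let d ∈ ℕ, let K ⊆ ℝ^d be a compact set, and let φ : ℝ → ℝ be a continuous sigmoidal function. Then for every continuous function f : K → ℝ and every ε > 0 there exist q ∈ ℕ, coefficients β_1, …, β_q ∈ ℝ, weight vectors w^1, …, w^q ∈ ℝ^d and biases b_1, …, b_q ∈ ℝ such that |∑_{i=1}^q β_i φ(w^i · x + b_i) − f(x)| < ε for all x ∈ K; i.e., the one-hidden-layer network functions with activation φ are uniformly dense in C(K). -/

import Mathlib

/-!
In dimension one, a continuous `g` on `[a, b]` is within `δ` of the staircase
`g a + ∑ⱼ (g sⱼ₊₁ - g sⱼ) H(t - sⱼ₊₁)` on a fine grid `sⱼ = a + j h`, where `H` is the Heaviside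
function, and `φ (L v)` is uniformly close to `H v` on `|v| ≥ h / 2` once `L` is large. Since the
grid is `h`-separated, each `t` lies within `h / 2` of at most one grid point, so replacing `H` by
`φ (L ·)` costs one bounded error term times `δ` plus `n` terms of size `δ / n`.

In higher dimension, composing these one-dimensional networks with `x ↦ ⟪w, x⟫` puts every
ridge function `exp ⟪w, x⟫` in the uniform closure of the networks on `K`. These exponentials are
closed under multiplication and separate points, so by Stone–Weierstrass their span is dense
in `C(K, ℝ)`.
-/

open Filter Topology Set

noncomputable def heaviside (v : ℝ) : ℝ := if 0 ≤ v then 1 else 0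

lemma abs_heaviside_le_one (v : ℝ) : |heaviside v| ≤ 1 := by
  unfold heaviside; split_ifs <;> norm_num

/-- For `σ = heaviside` this is the step function equal to `g (a + k h) - g a` on
`[a + k h, a + (k + 1) h)`; for `σ = φ (L ·)` it is a network function. -/
def staircase (σ g : ℝ → ℝ) (a h : ℝ) (n : ℕ) (t : ℝ) : ℝ :=
  ∑ j ∈ Finset.range n, (g (a + (j + 1) * h) - g (a + j * h)) * σ (t - (a + (j + 1) * h))

section Sigmoid

variable {φ : ℝ → ℝ}

lemma exists_abs_le_of_tendsto (hφc : Continuous φ) {l₁ l₀ : ℝ} (hφ1 : Tendsto φ atTop (𝓝 l₁))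
    (hφ0 : Tendsto φ atBot (𝓝 l₀)) : ∃ C, ∀ u, |φ u| ≤ C := by
  obtain ⟨C, hC⟩ := isBounded_iff_forall_norm_le.mp
    (hφc.isBounded_range_iff_isBigO_atTop_atBot.mpr ⟨hφ1.isBigO_one ℝ, hφ0.isBigO_one ℝ⟩)
  exact ⟨C, fun u => hC _ (mem_range_self u)⟩

lemma exists_abs_comp_mul_sub_heaviside_lt (hφ1 : Tendsto φ atTop (𝓝 1))
    (hφ0 : Tendsto φ atBot (𝓝 0)) {r η : ℝ} (hr : 0 < r) (hη : 0 < η) :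
    ∃ L : ℝ, ∀ v, r ≤ |v| → |φ (L * v) - heaviside v| < η := by
  obtain ⟨u₁, hu₁⟩ := eventually_atTop.mp (Metric.tendsto_nhds.mp hφ1 η hη)
  obtain ⟨u₀, hu₀⟩ := eventually_atBot.mp (Metric.tendsto_nhds.mp hφ0 η hη)
  set L := max |u₁| |u₀| / r
  have hL : 0 ≤ L := by positivity
  have hLr : L * r = max |u₁| |u₀| := div_mul_cancel₀ _ hr.ne'
  refine ⟨L, fun v hv => ?_⟩
  rcases le_or_gt 0 v with hv0 | hv0
  · rw [abs_of_nonneg hv0] at hv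
    have : u₁ ≤ L * v := by
      nlinarith [mul_le_mul_of_nonneg_left hv hL, le_abs_self u₁, le_max_left |u₁| |u₀|]
    simpa [heaviside, hv0, Real.dist_eq] using hu₁ _ this
  · rw [abs_of_neg hv0] at hv
    have : L * v ≤ u₀ := by
      nlinarith [mul_le_mul_of_nonneg_left hv hL, neg_abs_le u₀, le_max_right |u₁| |u₀|]
    simpa [heaviside, hv0.not_ge, Real.dist_eq] using hu₀ _ this

end Sigmoid

section Separated

variable {ι : Type*} {S : Finset ι} {s : ι → ℝ} {r : ℝ}

lemma card_filter_abs_sub_lt_le_one (hs : (S : Set ι).Pairwise fun i j => 2 * r ≤ |s i - s j|)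
    (t : ℝ) : (S.filter fun i => |t - s i| < r).card ≤ 1 := by
  refine Finset.card_le_one.mpr fun i hi j hj => by_contra fun hij => ?_
  rw [Finset.mem_filter] at hi hj
  have := abs_sub_le (s i) t (s j)
  rw [abs_sub_comm (s i) t] at this
  linarith [hs hi.1 hj.1 hij]

lemma sum_abs_sub_heaviside_le {σ : ℝ → ℝ} {D η : ℝ} (hD : ∀ v, |σ v - heaviside v| ≤ D)
    (hη : ∀ v, r ≤ |v| → |σ v - heaviside v| ≤ η)
    (hs : (S : Set ι).Pairwise fun i j => 2 * r ≤ |s i - s j|) (t : ℝ) :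
    ∑ i ∈ S, |σ (t - s i) - heaviside (t - s i)| ≤ D + S.card * η := by
  have hD0 : 0 ≤ D := (abs_nonneg _).trans (hD 0)
  have hη0 : 0 ≤ η := (abs_nonneg _).trans (hη |r| ((le_abs_self r).trans_eq (abs_abs r).symm))
  rw [← Finset.sum_filter_add_sum_filter_not S fun i => |t - s i| < r]
  apply add_le_add
  · calc _ ≤ (S.filter fun i => |t - s i| < r).card • D :=
          Finset.sum_le_card_nsmul _ _ _ fun i _ => hD _
      _ ≤ 1 • D := nsmul_le_nsmul_left hD0 (card_filter_abs_sub_lt_le_one hs t)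
      _ = D := one_nsmul D
  · calc _ ≤ (S.filter fun i => ¬ |t - s i| < r).card • η :=
          Finset.sum_le_card_nsmul _ _ _ fun i hi => hη _ (not_lt.mp (Finset.mem_filter.mp hi).2)
      _ ≤ S.card • η := nsmul_le_nsmul_left hη0 (Finset.card_filter_le _ _)
      _ = S.card * η := nsmul_eq_mul _ _

lemma abs_sum_mul_sub_sum_mul_heaviside_le {σ : ℝ → ℝ} {c : ι → ℝ} {D η δ : ℝ}
    (hD : ∀ v, |σ v - heaviside v| ≤ D) (hη : ∀ v, r ≤ |v| → |σ v - heaviside v| ≤ η)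
    (hc : ∀ i ∈ S, |c i| ≤ δ) (hδ : 0 ≤ δ)
    (hs : (S : Set ι).Pairwise fun i j => 2 * r ≤ |s i - s j|) (t : ℝ) :
    |∑ i ∈ S, c i * σ (t - s i) - ∑ i ∈ S, c i * heaviside (t - s i)| ≤ δ * (D + S.card * η) :=
  calc _ = |∑ i ∈ S, c i * (σ (t - s i) - heaviside (t - s i))| := by
        simp_rw [mul_sub, Finset.sum_sub_distrib]
    _ ≤ ∑ i ∈ S, |c i| * |σ (t - s i) - heaviside (t - s i)| :=
        (Finset.abs_sum_le_sum_abs _ _).trans_eq (by simp_rw [abs_mul])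
    _ ≤ ∑ i ∈ S, δ * |σ (t - s i) - heaviside (t - s i)| :=
        Finset.sum_le_sum fun i hi => mul_le_mul_of_nonneg_right (hc i hi) (abs_nonneg _)
    _ ≤ δ * (D + S.card * η) := by
        rw [← Finset.mul_sum]
        exact mul_le_mul_of_nonneg_left (sum_abs_sub_heaviside_le hD hη hs t) hδ

end Separated

lemma abs_staircase_heaviside_sub_le {g : ℝ → ℝ} {a h δ : ℝ} {n : ℕ} (hh : 0 < h)
    (hg : ∀ x ∈ Icc a (a + n * h), ∀ y ∈ Icc a (a + n * h), |x - y| ≤ h → |g x - g y| ≤ δ)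
    {t : ℝ} (ht : t ∈ Icc a (a + n * h)) :
    |staircase heaviside g a h n t - (g t - g a)| ≤ δ := by
  set k := ⌊(t - a) / h⌋₊
  have hk : ∀ j : ℕ, j ≤ k ↔ j * h ≤ t - a := fun j => by
    rw [Nat.le_floor_iff (div_nonneg (sub_nonneg.2 ht.1) hh.le), le_div_iff₀ hh]
  -- the `j`-th term is the increment of `G` at `j`, so the sum telescopes to `G (min n k) - g a`
  set G : ℕ → ℝ := fun i => g (a + (min i k : ℕ) * h)
  have hstep : ∀ j : ℕ, (g (a + (j + 1) * h) - g (a + j * h)) * heaviside (t - (a + (j + 1) * h))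
      = G (j + 1) - G j := fun j => by
    simp only [G]
    by_cases hj : j + 1 ≤ k
    · have := (hk _).1 hj
      push_cast at this
      rw [min_eq_left hj, min_eq_left (by omega), heaviside, if_pos (by linarith)]
      push_cast; ring
    · have := (hk _).not.1 hj
      push_cast at this
      rw [min_eq_right (by omega), min_eq_right (by omega), heaviside, if_neg (by linarith)]
      ring
  rw [staircase, Finset.sum_congr rfl fun j _ => hstep j, Finset.sum_range_sub]
  set m := min n k
  have hmk : (m : ℝ) * h ≤ t - a := (hk m).1 (min_le_right n k)
  have hmn : (m : ℝ) * h ≤ n * h :=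
    mul_le_mul_of_nonneg_right (by exact_mod_cast min_le_left n k) hh.le
  have htm : t - a ≤ m * h + h := by
    obtain hm | hm : m = n ∨ m = k := min_choice n k
    · rw [hm]; linarith [ht.2, hh]
    · have := (Nat.floor_lt (div_nonneg (sub_nonneg.2 ht.1) hh.le)).1 (Nat.lt_succ_self k)
      rw [div_lt_iff₀ hh] at this
      rw [hm]; push_cast at this; linarith
  have hG0 : G 0 = g a := by simp [G]
  rw [hG0, sub_sub_sub_cancel_right]
  exact hg _ ⟨by nlinarith [hh], by linarith⟩ t ht (by rw [abs_le]; constructor <;> linarith)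

lemma abs_staircase_sub_staircase_heaviside_le {σ g : ℝ → ℝ} {a h δ D η : ℝ} {n : ℕ}
    (hD : ∀ v, |σ v - heaviside v| ≤ D) (hη : ∀ v, h / 2 ≤ |v| → |σ v - heaviside v| ≤ η)
    (hh : 0 < h) (hδ : 0 ≤ δ)
    (hg : ∀ x ∈ Icc a (a + n * h), ∀ y ∈ Icc a (a + n * h), |x - y| ≤ h → |g x - g y| ≤ δ)
    (t : ℝ) : |staircase σ g a h n t - staircase heaviside g a h n t| ≤ δ * (D + n * η) := by
  have hc : ∀ j ∈ Finset.range n, |g (a + (j + 1) * h) - g (a + j * h)| ≤ δ := by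
    intro j hj
    have hjn : (j : ℝ) + 1 ≤ n := by exact_mod_cast Finset.mem_range.mp hj
    have hj0 : (0 : ℝ) ≤ j := j.cast_nonneg
    exact hg _ ⟨by nlinarith, by nlinarith⟩ _ ⟨by nlinarith, by nlinarith⟩
      (by rw [show a + (j + 1) * h - (a + j * h) = h by ring, abs_of_pos hh])
  have hs : ((Finset.range n : Finset ℕ) : Set ℕ).Pairwise
      fun i j => 2 * (h / 2) ≤ |(a + (i + 1) * h) - (a + (j + 1) * h)| := by
    intro i _ j _ hij
    rw [show a + (i + 1) * h - (a + (j + 1) * h) = (i - j) * h by ring, abs_mul, abs_of_pos hh]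
    have : (1 : ℝ) ≤ |(i : ℝ) - j| := by
      exact_mod_cast Int.one_le_abs (sub_ne_zero.2 (Int.ofNat_inj.not.2 hij))
    nlinarith
  exact (abs_sum_mul_sub_sum_mul_heaviside_le hD hη hc hδ hs t).trans_eq (by rw [Finset.card_range])

section Networks

variable {φ : ℝ → ℝ} {E : Type*} [NormedAddCommGroup E] [InnerProductSpace ℝ E]

variable (φ E) in
def networkFunctions : Submodule ℝ (E → ℝ) :=
  Submodule.span ℝ (range fun p : E × ℝ => fun x => φ (inner ℝ p.1 x + p.2))

lemma ridge_mem_networkFunctions (w : E) (b : ℝ) :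
    (fun x => φ (inner ℝ w x + b)) ∈ networkFunctions φ E :=
  Submodule.subset_span ⟨(w, b), rfl⟩

lemma const_mem_networkFunctions {c₀ : ℝ} (hc₀ : φ c₀ ≠ 0) (c : ℝ) :
    (fun _ : E => c) ∈ networkFunctions φ E := by
  convert Submodule.smul_mem _ (c / φ c₀) (ridge_mem_networkFunctions (φ := φ) (0 : E) c₀) using 1
  funext x
  simp [hc₀]

lemma continuous_of_mem_networkFunctions (hφc : Continuous φ) {F : E → ℝ}
    (hF : F ∈ networkFunctions φ E) : Continuous F := by
  induction hF using Submodule.span_induction with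
  | mem F hF => obtain ⟨⟨w, b⟩, rfl⟩ := hF; fun_prop
  | zero => exact continuous_const
  | add F G _ _ hF hG => exact hF.add hG
  | smul c F _ hF => exact hF.const_smul c

lemma comp_inner_mem_networkFunctions {F : ℝ → ℝ} (hF : F ∈ networkFunctions φ ℝ) (w : E) :
    (fun x => F (inner ℝ w x)) ∈ networkFunctions φ E := by
  have : (networkFunctions φ ℝ).map (LinearMap.funLeft ℝ ℝ fun x : E => inner ℝ w x)
      ≤ networkFunctions φ E := by
    refine (Submodule.map_span_le _ _ _).mpr ?_
    rintro _ ⟨⟨a, b⟩, rfl⟩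
    convert ridge_mem_networkFunctions (φ := φ) (a • w) b using 1
    funext x
    simp [real_inner_smul_left, mul_comm]
  exact this ⟨F, hF, rfl⟩

lemma exists_eq_sum_of_mem_networkFunctions {F : E → ℝ} (hF : F ∈ networkFunctions φ E) :
    ∃ (q : ℕ) (β : Fin q → ℝ) (w : Fin q → E) (b : Fin q → ℝ),
      F = fun x => ∑ i, β i * φ (inner ℝ (w i) x + b i) := by
  obtain ⟨q, β, G, rfl⟩ := Submodule.mem_span_set'.mp hF
  choose p hp using fun i => (G i).2
  refine ⟨q, β, fun i => (p i).1, fun i => (p i).2, ?_⟩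
  funext x
  simp [Finset.sum_apply, ← hp]

lemma staircase_comp_mul_mem_networkFunctions (g : ℝ → ℝ) (L a h : ℝ) (n : ℕ) :
    staircase (fun v => φ (L * v)) g a h n ∈ networkFunctions φ ℝ := by
  have : staircase (fun v => φ (L * v)) g a h n = ∑ j ∈ Finset.range n,
      (g (a + (j + 1) * h) - g (a + j * h)) •
        fun t => φ (inner ℝ L t + -(L * (a + (j + 1) * h))) := by
    funext t
    rw [staircase, Finset.sum_apply]
    refine Finset.sum_congr rfl fun j _ => ?_
    simp only [Pi.smul_apply, smul_eq_mul, Real.inner_apply]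
    ring_nf
  rw [this]
  exact Submodule.sum_mem _ fun j _ => Submodule.smul_mem _ _ (ridge_mem_networkFunctions _ _)

theorem exists_mem_networkFunctions_near_on_Icc (hφc : Continuous φ)
    (hφ1 : Tendsto φ atTop (𝓝 1)) (hφ0 : Tendsto φ atBot (𝓝 0)) {g : ℝ → ℝ} {a b ε : ℝ}
    (hab : a < b) (hg : ContinuousOn g (Icc a b)) (hε : 0 < ε) :
    ∃ F ∈ networkFunctions φ ℝ, ∀ t ∈ Icc a b, |F t - g t| < ε := by
  obtain ⟨C, hC⟩ := exists_abs_le_of_tendsto hφc hφ1 hφ0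
  set D := C + 1
  have hD : ∀ u v, |φ u - heaviside v| ≤ D := fun u v =>
    (abs_sub _ _).trans (add_le_add (hC u) (abs_heaviside_le_one v))
  have hD0 : 0 ≤ D := (abs_nonneg _).trans (hD 0 0)
  obtain ⟨c₀, hc₀⟩ := (hφ1.eventually_ne one_ne_zero).exists
  set δ := ε / (D + 3)
  have hδ : 0 < δ := by positivity
  have hδε : δ * (D + 3) = ε := div_mul_cancel₀ _ (by positivity)
  obtain ⟨h₀, hh₀, hg⟩ := Metric.uniformContinuousOn_iff_le.mp
    (isCompact_Icc.uniformContinuousOn_of_continuous hg) δ hδ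
  obtain ⟨n, hn⟩ := exists_nat_gt ((b - a) / h₀)
  have hn0 : (0 : ℝ) < n := (div_pos (sub_pos.2 hab) hh₀).trans hn
  set h := (b - a) / n
  have hh : 0 < h := div_pos (sub_pos.2 hab) hn0
  have hb : a + n * h = b := by simp only [h]; field_simp; ring
  have hhh₀ : h ≤ h₀ := by rw [div_lt_iff₀ hh₀] at hn; rw [div_le_iff₀ hn0]; linarith
  have hg' : ∀ x ∈ Icc a (a + n * h), ∀ y ∈ Icc a (a + n * h), |x - y| ≤ h → |g x - g y| ≤ δ := by
    rw [hb]
    intro x hx y hy hxy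
    simpa only [Real.dist_eq] using hg x hx y hy (by rw [Real.dist_eq]; linarith)
  obtain ⟨L, hL⟩ := exists_abs_comp_mul_sub_heaviside_lt hφ1 hφ0 (half_pos hh) (inv_pos.2 hn0)
  refine ⟨fun t => g a + staircase (fun v => φ (L * v)) g a h n t,
    add_mem (const_mem_networkFunctions hc₀ _) (staircase_comp_mul_mem_networkFunctions _ _ _ _ _),
    fun t ht => ?_⟩
  rw [← hb] at ht
  have hσ := abs_staircase_sub_staircase_heaviside_le (fun v => hD (L * v) v)
    (fun v hv => (hL v hv).le) hh hδ.le hg' t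
  have hH := abs_staircase_heaviside_sub_le hh hg' ht
  calc |g a + staircase (fun v => φ (L * v)) g a h n t - g t|
      = |(staircase (fun v => φ (L * v)) g a h n t - staircase heaviside g a h n t)
          + (staircase heaviside g a h n t - (g t - g a))| := by ring_nf
    _ ≤ δ * (D + n * (n : ℝ)⁻¹) + δ := (abs_add_le _ _).trans (add_le_add hσ hH)
    _ < ε := by rw [mul_inv_cancel₀ hn0.ne']; linarith

theorem exists_mem_networkFunctions_near_of_isCompact (hφc : Continuous φ)
    (hφ1 : Tendsto φ atTop (𝓝 1)) (hφ0 : Tendsto φ atBot (𝓝 0)) {g : ℝ → ℝ}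
    (hg : Continuous g) {S : Set ℝ} (hS : IsCompact S) {ε : ℝ} (hε : 0 < ε) :
    ∃ F ∈ networkFunctions φ ℝ, ∀ t ∈ S, |F t - g t| < ε := by
  obtain ⟨a, ha⟩ := hS.bddBelow
  obtain ⟨b, hb⟩ := hS.bddAbove
  obtain ⟨F, hF, hFg⟩ := exists_mem_networkFunctions_near_on_Icc hφc hφ1 hφ0
    (lt_max_of_lt_right (lt_add_one a)) hg.continuousOn hε (b := max b (a + 1))
  exact ⟨F, hF, fun t ht => hFg t ⟨ha ht, (hb ht).trans (le_max_left _ _)⟩⟩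

end Networks

section Restriction

variable {φ : ℝ → ℝ} {E : Type*} [NormedAddCommGroup E] [InnerProductSpace ℝ E] {K : Set E}

variable (φ K) in
/-- The continuous functions on `K` that are restrictions of network functions. -/
def networkFunctionsOn : Submodule ℝ C(K, ℝ) :=
  ((networkFunctions φ E).map (LinearMap.funLeft ℝ ℝ ((↑) : K → E))).comap
    (ContinuousMap.coeFnLinearMap ℝ)

lemma mem_topologicalClosure_networkFunctionsOn_iff [CompactSpace K] (hφc : Continuous φ)
    {g : C(K, ℝ)} : g ∈ (networkFunctionsOn φ K).topologicalClosure ↔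
      ∀ ε > 0, ∃ F ∈ networkFunctions φ E, ∀ x : K, |F x - g x| < ε := by
  rw [← SetLike.mem_coe, Submodule.topologicalClosure_coe, Metric.mem_closure_iff]
  refine forall₂_congr fun ε hε => ⟨?_, ?_⟩
  · rintro ⟨G, ⟨F, hF, hFG⟩, hdist⟩
    rw [dist_comm, dist_eq_norm, ContinuousMap.norm_lt_iff _ hε] at hdist
    refine ⟨F, hF, fun x => ?_⟩
    simpa [show F x = G x from congrFun hFG x] using hdist x
  · rintro ⟨F, hF, hFg⟩
    refine ⟨⟨fun x => F x, (continuous_of_mem_networkFunctions hφc hF).comp continuous_subtype_val⟩,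
      ⟨F, hF, rfl⟩, ?_⟩
    rw [dist_comm, dist_eq_norm, ContinuousMap.norm_lt_iff _ hε]
    exact hFg

variable (K) in
noncomputable def expRidge (w : E) : C(K, ℝ) := ⟨fun x => Real.exp (inner ℝ w (x : E)), by fun_prop⟩

lemma expRidge_zero : expRidge K (0 : E) = 1 := by ext; simp [expRidge]

lemma expRidge_add (v w : E) : expRidge K (v + w) = expRidge K v * expRidge K w := by
  ext; simp [expRidge, inner_add_left, Real.exp_add]

lemma toSubmodule_adjoin_range_expRidge :
    Subalgebra.toSubmodule (Algebra.adjoin ℝ (range (expRidge K))) =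
      Submodule.span ℝ (range (expRidge K)) := by
  refine Algebra.adjoin_eq_span_of_subset ℝ fun f hf => Submodule.subset_span ?_
  induction hf using Submonoid.closure_induction with
  | mem f hf => exact hf
  | one => exact ⟨0, expRidge_zero⟩
  | mul f g _ _ hf hg =>
    obtain ⟨v, rfl⟩ := hf
    obtain ⟨w, rfl⟩ := hg
    exact ⟨v + w, expRidge_add v w⟩

lemma separatesPoints_adjoin_range_expRidge :
    (Algebra.adjoin ℝ (range (expRidge K))).SeparatesPoints := by
  intro x y hxy
  refine ⟨_, ⟨expRidge K ((x : E) - y), Algebra.subset_adjoin ⟨_, rfl⟩, rfl⟩, fun h => hxy ?_⟩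
  have h' : inner ℝ ((x : E) - y) ((x : E) - y) = 0 := by
    rw [inner_sub_right, Real.exp_injective h, sub_self]
  exact Subtype.ext (sub_eq_zero.mp (inner_self_eq_zero.mp h'))

lemma expRidge_mem_topologicalClosure_networkFunctionsOn [CompactSpace K] (hφc : Continuous φ)
    (hφ1 : Tendsto φ atTop (𝓝 1)) (hφ0 : Tendsto φ atBot (𝓝 0)) (w : E) :
    expRidge K w ∈ (networkFunctionsOn φ K).topologicalClosure := by
  refine (mem_topologicalClosure_networkFunctionsOn_iff hφc).mpr fun ε hε => ?_
  obtain ⟨F, hF, hFexp⟩ := exists_mem_networkFunctions_near_of_isCompact hφc hφ1 hφ0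
    Real.continuous_exp
    (isCompact_range (by fun_prop : Continuous fun x : K => inner ℝ w (x : E))) hε
  exact ⟨fun x => F (inner ℝ w x), comp_inner_mem_networkFunctions hF w, fun x => hFexp _ ⟨x, rfl⟩⟩

theorem topologicalClosure_networkFunctionsOn [CompactSpace K] (hφc : Continuous φ)
    (hφ1 : Tendsto φ atTop (𝓝 1)) (hφ0 : Tendsto φ atBot (𝓝 0)) :
    (networkFunctionsOn φ K).topologicalClosure = ⊤ := by
  set A := Algebra.adjoin ℝ (range (expRidge K))
  have hA : (A : Set C(K, ℝ)) ⊆ (networkFunctionsOn φ K).topologicalClosure := by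
    change ((Subalgebra.toSubmodule A : Submodule ℝ C(K, ℝ)) : Set C(K, ℝ)) ⊆ _
    rw [toSubmodule_adjoin_range_expRidge, SetLike.coe_subset_coe, Submodule.span_le]
    exact range_subset_iff.mpr (expRidge_mem_topologicalClosure_networkFunctionsOn hφc hφ1 hφ0)
  refine eq_top_iff.mpr fun g _ => ?_
  have hg : g ∈ A.topologicalClosure := by
    rw [ContinuousMap.subalgebra_topologicalClosure_eq_top_of_separatesPoints A
      separatesPoints_adjoin_range_expRidge]
    exact Algebra.mem_top
  rw [← SetLike.mem_coe, Subalgebra.topologicalClosure_coe] at hg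
  exact closure_minimal hA (Submodule.isClosed_topologicalClosure _) hg

theorem exists_mem_networkFunctions_near_of_continuousOn (hφc : Continuous φ)
    (hφ1 : Tendsto φ atTop (𝓝 1)) (hφ0 : Tendsto φ atBot (𝓝 0)) (hK : IsCompact K)
    {f : E → ℝ} (hf : ContinuousOn f K) {ε : ℝ} (hε : 0 < ε) :
    ∃ F ∈ networkFunctions φ E, ∀ x ∈ K, |F x - f x| < ε := by
  have := isCompact_iff_compactSpace.mp hK
  have hmem : (⟨K.domRestrict f, hf.domRestrict⟩ : C(K, ℝ)) ∈
      (networkFunctionsOn φ K).topologicalClosure := by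
    rw [topologicalClosure_networkFunctionsOn hφc hφ1 hφ0]
    exact Submodule.mem_top
  obtain ⟨F, hF, hFf⟩ := (mem_topologicalClosure_networkFunctionsOn_iff hφc).mp hmem ε hε
  exact ⟨F, hF, fun x hx => hFf ⟨x, hx⟩⟩

end Restriction

/-- One-hidden-layer feedforward networks with a continuous sigmoidal
activation function are uniformly dense in the continuous functions on a compact
set `K ⊆ ℝ^d`. -/
theorem one_hidden_layer_sigmoidal_dense
    (d : ℕ) (K : Set (EuclideanSpace ℝ (Fin d))) (hK : IsCompact K)
    (φ : ℝ → ℝ) (hφc : Continuous φ)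
    (hφ1 : Filter.Tendsto φ Filter.atTop (nhds 1))
    (hφ0 : Filter.Tendsto φ Filter.atBot (nhds 0))
    (f : EuclideanSpace ℝ (Fin d) → ℝ) (hf : ContinuousOn f K)
    (ε : ℝ) (hε : 0 < ε) :
    ∃ (q : ℕ) (β : Fin q → ℝ) (w : Fin q → EuclideanSpace ℝ (Fin d)) (b : Fin q → ℝ),
      ∀ x ∈ K, |(∑ i : Fin q, β i * φ ((inner ℝ (w i) x : ℝ) + b i)) - f x| < ε := by
  obtain ⟨F, hF, hFf⟩ := exists_mem_networkFunctions_near_of_continuousOn hφc hφ1 hφ0 hK hf hε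
  obtain ⟨q, β, w, b, rfl⟩ := exists_eq_sum_of_mem_networkFunctions hF
  exact ⟨q, β, w, b, hFf⟩
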